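/- Define N(n) = |LE(n) ∩ ((n−1)!, n!]| for each positive integer n. Then for every integer n ≥ 2, N(n) ≤ ⌈(n−2)!/n⌉ + N(n−1). -/

import Mathlib

/-!
A poset on `n` points with more than `(n-1)!` linear extensions has an isolated point. If the
poset is connected, the cyclic shifts `L + k` (`k : Fin n`) of its linear extensions `L` are
pairwise distinct bijections onto `Fin n`, so `n · e(P) ≤ n!`. If it is disconnected and has no
isolated point, a union of components `S` gives `e(P) = C(n, |S|) · e(S) · e(Sᶜ)` with
`|S|, |Sᶜ| ≥ 2`, and induction again yields `e(P) ≤ (n-1)!`. Deleting an isolated point divides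
`e(P)` by `n`, so every element of `LE(n) ∩ ((n-1)!, n!]` is `n · m` with
`m ∈ LE(n-1) ∩ ((n-1)!/n, (n-1)!]`. Those `m > (n-2)!` are counted by `N(n-1)`, and the
interval `((n-1)!/n, (n-2)!] = ((n-2)! - (n-2)!/n, (n-2)!]` holds at most `⌈(n-2)!/n⌉` integers.
-/

/-- The number of linear extensions of a finite poset `P`: the number of
order-preserving bijections from `P` to the chain `Fin |P|`. -/
noncomputable def extNum (P : Type*) [instF : Fintype P] [instO : PartialOrder P] : ℕ :=
  Nat.card {f : P ≃ Fin (Fintype.card P) // ∀ x y : P, x ≤ y → f x ≤ f y}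

/-- `LEset n` is the set of positive integers arising as the number of linear
extensions of some poset with exactly `n` elements. -/
def LEset (n : ℕ) : Set ℕ :=
  {m | 0 < m ∧ ∃ r : PartialOrder (Fin n), extNum (Fin n) (instO := r) = m}

/-- `N(n) = |LE(n) ∩ ((n-1)!, n!]|`. -/
noncomputable def bigN (n : ℕ) : ℕ :=
  (LEset n ∩ Set.Ioc (Nat.factorial (n - 1)) (Nat.factorial n)).ncard

open Relation
open scoped Nat

abbrev LinExt (P : Type*) [Preorder P] (n : ℕ) := {f : P ≃ Fin n // Monotone f}

section Basic

variable {P : Type*} [Fintype P] [PartialOrder P]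

theorem extNum_eq_card_linExt : extNum P = Nat.card (LinExt P (Fintype.card P)) := rfl

instance : Nonempty (LinExt P (Fintype.card P)) := by
  let _ : Fintype (LinearExtension P) := ‹Fintype P›
  let e := monoEquivOfFin (LinearExtension P) rfl
  exact ⟨(Equiv.refl P).trans e.symm.toEquiv, e.symm.monotone.comp toLinearExtension.monotone⟩

theorem extNum_pos : 0 < extNum P := by
  rw [extNum_eq_card_linExt]
  exact Nat.card_pos

theorem extNum_eq_one [Subsingleton P] : extNum P = 1 := by
  rw [extNum_eq_card_linExt]
  exact Nat.card_eq_one_iff_unique.mpr ⟨inferInstance, inferInstance⟩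

theorem extNum_congr {Q : Type*} [Fintype Q] [PartialOrder Q] (e : P ≃o Q) :
    extNum P = extNum Q := by
  have hc : Fintype.card P = Fintype.card Q := Fintype.card_congr e.toEquiv
  refine Nat.card_congr (Equiv.subtypeEquiv (e.toEquiv.equivCongr (finCongr hc)) fun f => ?_)
  constructor
  · intro hf x y hxy
    simpa using hf _ _ (e.symm.monotone hxy)
  · intro hf x y hxy
    simpa using hf _ _ (e.monotone hxy)

theorem extNum_mem_LEset {n : ℕ} (h : Fintype.card P = n) : extNum P ∈ LEset n := by
  let g : Fin n ≃ P := (Fintype.equivFinOfCardEq h).symm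
  let r : PartialOrder (Fin n) := PartialOrder.lift g g.injective
  exact ⟨extNum_pos, r, extNum_congr { toEquiv := g, map_rel_iff' := Iff.rfl }⟩

end Basic

theorem Fin.sub_le_val_iff_of_le_of_add_le_add {n : ℕ} {i j k : Fin n} (hij : i ≤ j)
    (hk : i + k ≤ j + k) : n - k ≤ (i : ℕ) ↔ n - k ≤ (j : ℕ) := by
  rw [Fin.le_def, Fin.val_add_eq_ite, Fin.val_add_eq_ite] at hk
  rw [Fin.le_def] at hij
  have := j.isLt
  split_ifs at hk <;> omega

theorem Relation.EqvGen.mem_iff {α : Type*} {r : α → α → Prop} {S : Set α}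
    (hS : ∀ x y, r x y → (x ∈ S ↔ y ∈ S)) {x y : α} (h : EqvGen r x y) : x ∈ S ↔ y ∈ S :=
  (show Equivalence fun a b => (a ∈ S ↔ b ∈ S) from ⟨fun _ => Iff.rfl, Iff.symm, Iff.trans⟩
    ).eqvGen_iff.mp (h.mono hS)

section Connected

variable {P : Type*} [PartialOrder P]

/-- The elements whose label wraps around when `k` is added, those at positions `≥ n - k`, form
a union of components, which is nonempty and proper unless `k = 0`. -/
theorem eq_zero_of_monotone_add_right (hP : ∀ x y : P, EqvGen (· ≤ ·) x y) {n : ℕ} [NeZero n]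
    {L : P ≃ Fin n} (hL : Monotone L) {k : Fin n} (hLk : Monotone fun x => L x + k) : k = 0 := by
  by_contra hk0
  have hk : (k : ℕ) ≠ 0 := Fin.val_ne_zero_iff.mpr hk0
  let S : Set P := {x | n - k ≤ (L x : ℕ)}
  have hS : ∀ x y, x ≤ y → (x ∈ S ↔ y ∈ S) := fun x y hxy =>
    Fin.sub_le_val_iff_of_le_of_add_le_add (hL hxy) (hLk hxy)
  have htop : L.symm ⟨n - 1, by omega⟩ ∈ S := by
    simp only [S, Set.mem_ofPred_eq, Equiv.apply_symm_apply]; omega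
  have hbot : L.symm 0 ∉ S := by
    simp only [S, Set.mem_ofPred_eq, Equiv.apply_symm_apply, Fin.val_zero]; omega
  exact hbot ((hP _ _).mem_iff hS |>.mp htop)

variable [Fintype P]

theorem card_mul_extNum_le_factorial (hP : ∀ x y : P, EqvGen (· ≤ ·) x y) :
    Fintype.card P * extNum P ≤ (Fintype.card P)! := by
  classical
  set n := Fintype.card P
  obtain hn | hn := n.eq_zero_or_pos
  · simp [hn]
  have : NeZero n := ⟨hn.ne'⟩
  let rotate : Fin n × LinExt P n → P ≃ Fin n := fun p => p.2.1.trans (Equiv.addRight p.1)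
  have hinj : rotate.Injective := by
    rintro ⟨k, L, hL⟩ ⟨k', L', hL'⟩ h
    have hx : ∀ x, L x + k = L' x + k' := fun x => DFunLike.congr_fun h x
    have hLL' : (fun x => L x + (k - k')) = L' := funext fun x => by
      rw [← add_sub_assoc, hx, add_sub_cancel_right]
    obtain rfl : k = k' := sub_eq_zero.mp (eq_zero_of_monotone_add_right hP hL (hLL' ▸ hL'))
    obtain rfl : L = L' := Equiv.ext fun x => add_right_cancel (hx x)
    rfl
  obtain ⟨L₀⟩ := (inferInstance : Nonempty (LinExt P n))
  calc n * extNum P = Nat.card (Fin n × LinExt P n) := by simp [extNum_eq_card_linExt, n]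
    _ ≤ Nat.card (P ≃ Fin n) := Nat.card_le_card_of_injective _ hinj
    _ = n ! := by rw [Nat.card_eq_fintype_card, Fintype.card_equiv L₀.1]

end Connected

namespace Equiv

variable {P : Type*} {n : ℕ} (S : Set P) [DecidablePred (· ∈ S)]

def positions (L : P ≃ Fin n) : Finset (Fin n) := Finset.univ.filter fun i => L.symm i ∈ S

theorem apply_mem_positions {L : P ≃ Fin n} {x : P} : L x ∈ L.positions S ↔ x ∈ S := by
  simp [positions]

theorem positions_compl (L : P ≃ Fin n) : L.positions Sᶜ = (L.positions S)ᶜ := by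
  ext i; simp [positions]

variable [Fintype P]

theorem card_positions (L : P ≃ Fin n) : (L.positions S).card = Fintype.card S := by
  rw [positions, ← Fintype.card_subtype]
  exact Fintype.card_congr (L.symm.subtypeEquiv fun _ => Iff.rfl)

/-- The standardization of `L` on `S`: the order of `L` on `S`, relabelled by `Fin |S|`. -/
def restrictFin (L : P ≃ Fin n) : S ≃ Fin (Fintype.card S) :=
  (L.subtypeEquiv fun _ => (apply_mem_positions S).symm).trans
    ((L.positions S).orderIsoOfFin (L.card_positions S)).symm.toEquiv

theorem orderEmbOfFin_restrictFin (L : P ≃ Fin n) (s : S) :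
    (L.positions S).orderEmbOfFin (L.card_positions S) (L.restrictFin S s) = L s := by
  rw [← Finset.coe_orderIsoOfFin_apply]
  simp [restrictFin]

theorem eq_of_positions_eq_of_restrictFin_eq {L L' : P ≃ Fin n}
    (hpos : L.positions S = L'.positions S) (hres : L.restrictFin S = L'.restrictFin S)
    (hres' : L.restrictFin Sᶜ = L'.restrictFin Sᶜ) : L = L' := by
  have key : ∀ (T : Set P) [DecidablePred (· ∈ T)], L.positions T = L'.positions T →
      L.restrictFin T = L'.restrictFin T → ∀ x ∈ T, L x = L' x := by
    intro T _ hpos hres x hx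
    have e := L.orderEmbOfFin_restrictFin T ⟨x, hx⟩
    simp only [hpos, hres] at e
    exact e.symm.trans (L'.orderEmbOfFin_restrictFin T ⟨x, hx⟩)
  ext x
  by_cases hx : x ∈ S
  · exact congrArg Fin.val (key S hpos hres x hx)
  · refine congrArg Fin.val (key Sᶜ ?_ hres' x hx)
    rw [positions_compl, positions_compl, hpos]

theorem monotone_restrictFin [Preorder P] {L : P ≃ Fin n} (hL : Monotone L) :
    Monotone (L.restrictFin S) :=
  fun s t hst => ((L.positions S).orderIsoOfFin _).symm.monotone (show L s ≤ L t from hL hst)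

end Equiv

section Merge

variable {P : Type*} [Fintype P] (S : Set P) [DecidablePred (· ∈ S)]

/-- Places `S` on the positions `A` and `Sᶜ` on `Aᶜ`, in the orders `f` and `g`; this inverts
`L ↦ (L.positions S, L.restrictFin S, L.restrictFin Sᶜ)`. -/
def mergeFin (A : Finset (Fin (Fintype.card P))) (hA : A.card = Fintype.card S)
    (hAc : Aᶜ.card = Fintype.card ↥Sᶜ) (f : S ≃ Fin (Fintype.card S))
    (g : ↥Sᶜ ≃ Fin (Fintype.card ↥Sᶜ)) (x : P) : Fin (Fintype.card P) :=
  if hx : x ∈ S then A.orderEmbOfFin hA (f ⟨x, hx⟩) else Aᶜ.orderEmbOfFin hAc (g ⟨x, hx⟩)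

variable {S} {A : Finset (Fin (Fintype.card P))} {hA : A.card = Fintype.card S}
  {hAc : Aᶜ.card = Fintype.card ↥Sᶜ} {f : S ≃ Fin (Fintype.card S)}
  {g : ↥Sᶜ ≃ Fin (Fintype.card ↥Sᶜ)}

theorem mergeFin_of_mem {x : P} (hx : x ∈ S) :
    mergeFin S A hA hAc f g x = A.orderEmbOfFin hA (f ⟨x, hx⟩) := dif_pos hx

theorem mergeFin_of_not_mem {x : P} (hx : x ∉ S) :
    mergeFin S A hA hAc f g x = Aᶜ.orderEmbOfFin hAc (g ⟨x, hx⟩) := dif_neg hx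

theorem mergeFin_mem_iff {x : P} : mergeFin S A hA hAc f g x ∈ A ↔ x ∈ S := by
  by_cases hx : x ∈ S
  · simp [mergeFin_of_mem hx, hx]
  · simp only [mergeFin_of_not_mem hx, hx, iff_false]
    exact Finset.mem_compl.mp (Aᶜ.orderEmbOfFin_mem hAc _)

theorem mergeFin_bijective : (mergeFin S A hA hAc f g).Bijective := by
  refine (Fintype.bijective_iff_injective_and_card _).mpr ⟨fun x y h => ?_, by simp⟩
  by_cases hx : x ∈ S <;> by_cases hy : y ∈ S
  · rw [mergeFin_of_mem hx, mergeFin_of_mem hy] at h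
    exact congrArg Subtype.val (f.injective ((A.orderEmbOfFin hA).injective h))
  · have hx' : mergeFin S A hA hAc f g x ∈ A := mergeFin_mem_iff.mpr hx
    exact absurd (mergeFin_mem_iff.mp (h ▸ hx')) hy
  · have hy' : mergeFin S A hA hAc f g y ∈ A := mergeFin_mem_iff.mpr hy
    exact absurd (mergeFin_mem_iff.mp (h ▸ hy')) hx
  · rw [mergeFin_of_not_mem hx, mergeFin_of_not_mem hy] at h
    exact congrArg Subtype.val (g.injective ((Aᶜ.orderEmbOfFin hAc).injective h))

theorem monotone_mergeFin [PartialOrder P] (hS : ∀ x y : P, x ≤ y → (x ∈ S ↔ y ∈ S))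
    (hf : Monotone f) (hg : Monotone g) : Monotone (mergeFin S A hA hAc f g) := by
  intro x y hxy
  by_cases hx : x ∈ S
  · have hy := (hS x y hxy).mp hx
    rw [mergeFin_of_mem hx, mergeFin_of_mem hy]
    exact (A.orderEmbOfFin hA).monotone (hf (show (⟨x, hx⟩ : S) ≤ ⟨y, hy⟩ from hxy))
  · have hy : y ∉ S := fun hy => hx ((hS x y hxy).mpr hy)
    rw [mergeFin_of_not_mem hx, mergeFin_of_not_mem hy]
    exact (Aᶜ.orderEmbOfFin hAc).monotone (hg (show (⟨x, hx⟩ : ↥Sᶜ) ≤ ⟨y, hy⟩ from hxy))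

theorem eq_of_mergeFin_eq {A' : Finset (Fin (Fintype.card P))} {hA' : A'.card = Fintype.card S}
    {hAc' : A'ᶜ.card = Fintype.card ↥Sᶜ} {f' : S ≃ Fin (Fintype.card S)}
    {g' : ↥Sᶜ ≃ Fin (Fintype.card ↥Sᶜ)}
    (h : mergeFin S A hA hAc f g = mergeFin S A' hA' hAc' f' g') : A = A' ∧ f = f' ∧ g = g' := by
  obtain rfl : A = A' := by
    ext i
    obtain ⟨x, rfl⟩ := (mergeFin_bijective (S := S) (hA := hA) (hAc := hAc) (f := f)
      (g := g)).surjective i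
    rw [mergeFin_mem_iff, h, mergeFin_mem_iff]
  refine ⟨rfl, Equiv.ext fun s => ?_, Equiv.ext fun s => ?_⟩
  · have := congrFun h s
    rwa [mergeFin_of_mem s.2, mergeFin_of_mem s.2, (A.orderEmbOfFin hA).injective.eq_iff] at this
  · have := congrFun h s
    rwa [mergeFin_of_not_mem s.2, mergeFin_of_not_mem s.2,
      (Aᶜ.orderEmbOfFin hAc).injective.eq_iff] at this

end Merge

section ProductFormula

variable {P : Type*} [Fintype P] [PartialOrder P]

theorem extNum_eq_choose_mul (S : Set P) [DecidablePred (· ∈ S)]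
    (hS : ∀ x y : P, x ≤ y → (x ∈ S ↔ y ∈ S)) :
    extNum P = (Fintype.card P).choose (Fintype.card S) * (extNum S * extNum ↥Sᶜ) := by
  set n := Fintype.card P
  let Data := {A : Finset (Fin n) // A.card = Fintype.card S} ×
    LinExt S (Fintype.card S) × LinExt ↥Sᶜ (Fintype.card ↥Sᶜ)
  have hcard : Nat.card Data = n.choose (Fintype.card S) * (extNum S * extNum ↥Sᶜ) := by
    rw [Nat.card_prod, Nat.card_prod, Nat.card_eq_fintype_card (α := {A : Finset (Fin n) // _}),
      Fintype.card_finset_len, Fintype.card_fin]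
    rfl
  have hAc {A : Finset (Fin n)} (hA : A.card = Fintype.card S) : Aᶜ.card = Fintype.card ↥Sᶜ := by
    rw [Finset.card_compl, Fintype.card_fin, hA, Fintype.card_compl_set]
  let split (L : LinExt P n) : Data :=
    (⟨L.1.positions S, L.1.card_positions S⟩, ⟨L.1.restrictFin S, L.1.monotone_restrictFin S L.2⟩,
      ⟨L.1.restrictFin Sᶜ, L.1.monotone_restrictFin Sᶜ L.2⟩)
  let merge (d : Data) : LinExt P n :=
    ⟨Equiv.ofBijective _
      (mergeFin_bijective (hA := d.1.2) (hAc := hAc d.1.2) (f := d.2.1.1) (g := d.2.2.1)),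
      monotone_mergeFin hS d.2.1.2 d.2.2.2⟩
  rw [extNum_eq_card_linExt, ← hcard]
  refine le_antisymm (Nat.card_le_card_of_injective split fun L L' h => ?_)
    (Nat.card_le_card_of_injective merge fun d d' h => ?_)
  · simp only [split, Data, Prod.mk.injEq, Subtype.mk.injEq] at h
    exact Subtype.ext (Equiv.eq_of_positions_eq_of_restrictFin_eq S h.1 h.2.1 h.2.2)
  · obtain ⟨hA, hf, hg⟩ := eq_of_mergeFin_eq (congrArg (fun L : LinExt P n => ⇑L.1) h)
    ext1
    · exact Subtype.ext hA
    · exact Prod.ext (Subtype.ext hf) (Subtype.ext hg)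

end ProductFormula

theorem Nat.choose_mul_factorial_pred_mul_factorial_pred_le {a b : ℕ} (ha : 2 ≤ a) (hb : 2 ≤ b) :
    (a + b).choose a * ((a - 1)! * (b - 1)!) ≤ (a + b - 1)! := by
  refine Nat.le_of_mul_le_mul_right ?_ (show 0 < a + b by omega)
  have hab : a + b ≤ a * b := by nlinarith
  calc (a + b).choose a * ((a - 1)! * (b - 1)!) * (a + b)
      ≤ (a + b).choose a * ((a - 1)! * (b - 1)!) * (a * b) := Nat.mul_le_mul_left _ hab
    _ = (a + b).choose a * (a * (a - 1)!) * (b * (b - 1)!) := by ring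
    _ = (a + b - 1)! * (a + b) := by
      have := Nat.choose_mul_factorial_mul_factorial (Nat.le_add_right a b)
      rw [Nat.add_sub_cancel_left] at this
      rw [Nat.mul_factorial_pred (by omega), Nat.mul_factorial_pred (by omega), this, mul_comm,
        Nat.mul_factorial_pred (by omega)]

section IsolatedPoints

variable {P : Type*} [PartialOrder P]

theorem exists_ne_comparable_subtype {T : Set P}
    (hT : ∀ x y : P, x ≤ y → (x ∈ T ↔ y ∈ T)) (h : ∀ x : P, ∃ y ≠ x, x ≤ y ∨ y ≤ x) (x : T) :
    ∃ y ≠ x, x ≤ y ∨ y ≤ x := by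
  obtain ⟨y, hne, hxy⟩ := h x
  have hy : y ∈ T := hxy.elim (fun h => (hT _ _ h).mp x.2) (fun h => (hT _ _ h).mpr x.2)
  exact ⟨⟨y, hy⟩, fun e => hne (congrArg Subtype.val e), hxy⟩

variable [Fintype P]

theorem extNum_eq_card_mul_extNum_compl_singleton [DecidableEq P] {x₀ : P}
    (hx₀ : ∀ y, x₀ ≤ y ∨ y ≤ x₀ → y = x₀) :
    extNum P = Fintype.card P * extNum ↥({x₀}ᶜ : Set P) := by
  have hS : ∀ x y : P, x ≤ y → (x ∈ ({x₀} : Set P) ↔ y ∈ ({x₀} : Set P)) := by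
    intro x y hxy
    simp only [Set.mem_singleton_iff]
    constructor
    · rintro rfl; exact hx₀ y (.inl hxy)
    · rintro rfl; exact hx₀ x (.inr hxy)
  rw [extNum_eq_choose_mul {x₀} hS]
  simp [extNum_eq_one]

theorem extNum_le_factorial_pred (h : ∀ x : P, ∃ y ≠ x, x ≤ y ∨ y ≤ x) :
    extNum P ≤ (Fintype.card P - 1)! := by
  induction hn : Fintype.card P using Nat.strong_induction_on generalizing P with
  | _ n ih =>
  classical
  by_cases hconn : ∀ x y : P, EqvGen (· ≤ ·) x y
  · obtain rfl | hpos := n.eq_zero_or_pos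
    · have : IsEmpty P := Fintype.card_eq_zero_iff.mp hn
      simp [extNum_eq_one]
    · have := card_mul_extNum_le_factorial hconn
      rw [hn, ← Nat.mul_factorial_pred hpos.ne'] at this
      exact Nat.le_of_mul_le_mul_left this hpos
  push Not at hconn
  obtain ⟨a, b, hab⟩ := hconn
  let S : Set P := {y | EqvGen (· ≤ ·) a y}
  have hS : ∀ x y : P, x ≤ y → (x ∈ S ↔ y ∈ S) := fun x y hxy =>
    ⟨fun hx => hx.trans _ _ _ (.rel _ _ hxy), fun hy => hy.trans _ _ _ (.symm _ _ (.rel _ _ hxy))⟩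
  have hSc : ∀ x y : P, x ≤ y → (x ∈ Sᶜ ↔ y ∈ Sᶜ) := fun x y hxy => not_congr (hS x y hxy)
  have hSiso := exists_ne_comparable_subtype hS h
  have hSciso := exists_ne_comparable_subtype hSc h
  have hq : 2 ≤ Fintype.card S := by
    obtain ⟨y, hy, -⟩ := hSiso ⟨a, .refl a⟩
    exact Fintype.one_lt_card_iff_nontrivial.mpr (nontrivial_of_ne y _ hy)
  have hqc : 2 ≤ Fintype.card ↥Sᶜ := by
    obtain ⟨y, hy, -⟩ := hSciso ⟨b, hab⟩
    exact Fintype.one_lt_card_iff_nontrivial.mpr (nontrivial_of_ne y _ hy)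
  have hsum : Fintype.card S + Fintype.card ↥Sᶜ = n := by
    have := set_fintype_card_le_univ S
    rw [Fintype.card_compl_set, ← hn]
    omega
  rw [extNum_eq_choose_mul S hS, hn, ← hsum]
  calc _ ≤ (Fintype.card S + Fintype.card ↥Sᶜ).choose (Fintype.card S) *
        ((Fintype.card S - 1)! * (Fintype.card ↥Sᶜ - 1)!) := by
        gcongr
        · exact ih _ (by omega) hSiso rfl
        · exact ih _ (by omega) hSciso rfl
    _ ≤ _ := Nat.choose_mul_factorial_pred_mul_factorial_pred_le hq hqc

end IsolatedPoints

theorem exists_mem_LEset_eq_mul_of_factorial_lt_extNum {P : Type*} [Fintype P] [PartialOrder P]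
    {n : ℕ} (hP : Fintype.card P = n + 1) (h : n ! < extNum P) :
    ∃ m ∈ LEset n, extNum P = (n + 1) * m := by
  classical
  by_cases hiso : ∀ x : P, ∃ y ≠ x, x ≤ y ∨ y ≤ x
  · exact absurd (extNum_le_factorial_pred hiso) (by simpa [hP] using h)
  obtain ⟨x₀, hx₀⟩ := not_forall.mp hiso
  rw [extNum_eq_card_mul_extNum_compl_singleton (x₀ := x₀) fun y hy =>
    by_contra fun hne => hx₀ ⟨y, hne, hy⟩, hP]
  refine ⟨_, extNum_mem_LEset ?_, rfl⟩
  rw [Fintype.card_compl_set, hP, Set.card_singleton, Nat.add_sub_cancel]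

theorem ncard_setOf_lt_mul_le_ceil {n : ℕ} (hn : 0 < n) (M : ℕ) :
    {m : ℕ | (n - 1) * M < n * m ∧ m ≤ M}.ncard ≤ ⌈(M : ℚ) / n⌉₊ := by
  set c := ⌈(M : ℚ) / n⌉₊
  have hc : M ≤ n * c := by
    have := Nat.le_ceil ((M : ℚ) / n)
    rw [div_le_iff₀ (by positivity)] at this
    exact_mod_cast this.trans_eq (mul_comm _ _)
  have hsub : {m : ℕ | (n - 1) * M < n * m ∧ m ≤ M} ⊆ Finset.Ioc (M - c) M := by
    rintro m ⟨hlt, hle⟩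
    refine Finset.mem_coe.mpr (Finset.mem_Ioc.mpr ⟨?_, hle⟩)
    by_contra! hm
    have h1 : n * m ≤ n * M - n * c := (Nat.mul_le_mul_left n hm).trans_eq (Nat.mul_sub n M c)
    have h2 : (n - 1) * M = n * M - M := by rw [Nat.sub_mul, one_mul]
    omega
  calc _ ≤ (Finset.Ioc (M - c) M : Set ℕ).ncard := Set.ncard_le_ncard hsub (Finset.finite_toSet _)
    _ ≤ c := by rw [Set.ncard_coe_finset, Nat.card_Ioc]; omega

theorem bigN_succ_le_ncard (n : ℕ) :
    bigN (n + 1) ≤ (LEset n ∩ {m | n ! < (n + 1) * m ∧ m ≤ n !}).ncard := by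
  have hsub : LEset (n + 1) ∩ Set.Ioc n ! (n + 1)! ⊆
      (fun m => (n + 1) * m) '' (LEset n ∩ {m | n ! < (n + 1) * m ∧ m ≤ n !}) := by
    rintro _ ⟨hm, hlt, hle⟩
    obtain ⟨-, r, rfl⟩ := hm
    obtain ⟨m, hm', hm⟩ :=
      @exists_mem_LEset_eq_mul_of_factorial_lt_extNum _ _ r _ (Fintype.card_fin _) hlt
    rw [hm, Nat.factorial_succ] at hle
    rw [hm] at hlt ⊢
    exact ⟨m, ⟨hm', hlt, Nat.le_of_mul_le_mul_left hle n.succ_pos⟩, rfl⟩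
  have hfin : (LEset n ∩ {m | n ! < (n + 1) * m ∧ m ≤ n !}).Finite :=
    (Set.finite_Iic n !).subset fun m hm => hm.2.2
  calc bigN (n + 1) ≤ _ := Set.ncard_le_ncard hsub (hfin.image _)
    _ ≤ _ := Set.ncard_image_le hfin

theorem ncard_le_ceil_add_bigN (n : ℕ) :
    (LEset (n + 1) ∩ {m | (n + 1)! < (n + 1 + 1) * m ∧ m ≤ (n + 1)!}).ncard ≤
      ⌈(n ! : ℚ) / (n + 2)⌉₊ + bigN (n + 1) := by
  have hsub : LEset (n + 1) ∩ {m | (n + 1)! < (n + 1 + 1) * m ∧ m ≤ (n + 1)!} ⊆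
      {m | (n + 2 - 1) * n ! < (n + 2) * m ∧ m ≤ n !} ∪ (LEset (n + 1) ∩ Set.Ioc n ! (n + 1)!) := by
    rintro m ⟨hm, hlt, hle⟩
    rw [Nat.factorial_succ] at hlt
    by_cases hmn : m ≤ (n !)
    · exact .inl ⟨hlt, hmn⟩
    · exact .inr ⟨hm, not_le.mp hmn, hle⟩
  have hfin : (LEset (n + 1) ∩ Set.Ioc n ! (n + 1)!).Finite :=
    (Set.finite_Ioc _ _).subset Set.inter_subset_right
  calc _ ≤ _ := Set.ncard_le_ncard hsub (((Set.finite_Iic n !).subset fun m hm => hm.2).union hfin)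
    _ ≤ _ := Set.ncard_union_le _ _
    _ ≤ _ := Nat.add_le_add_right
      (by simpa using ncard_setOf_lt_mul_le_ceil (n := n + 2) (by omega) n !) _

/-- For every integer `n ≥ 2`, `N(n) ≤ ⌈(n-2)!/n⌉ + N(n-1)`. -/
theorem statement9 (n : ℕ) (hn : 2 ≤ n) :
    (bigN n : ℤ) ≤ ⌈(Nat.factorial (n - 2) : ℚ) / (n : ℚ)⌉ + (bigN (n - 1) : ℤ) := by
  obtain ⟨k, rfl⟩ : ∃ k, n = k + 2 := ⟨n - 2, by omega⟩
  have h := (bigN_succ_le_ncard (k + 1)).trans (ncard_le_ceil_add_bigN k)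
  rw [← Int.natCast_ceil_eq_ceil (by positivity)]
  exact_mod_cast h
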